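/- arXiv:1603.00244 — 3 statements merged into one kernel-verified Lean document; each statement's English description precedes it below -/
import Mathlib

section
/- Suppose |p_2^1 - p_2^2| * r < |p_1^1 - p_1^2| * w_d * d_{1,0}. Then p_1^1 != p_1^2; let m* in {1,2} be the content with p_1^{m*} > p_1^{m'}, where m' denotes the other content. Then for every x_2 in S with x_2^{m*} = 0, the strategy x_1 with x_1^{m*} = 1 and x_1^{m'} = 0 (completely caching UT 1's favorite content m*) maximizes U_1(., x_2) over the set { x_1 in S : x_1^m + x_2^m <= 1 for m = 1, 2 }; in particular this holds when x_2 completely caches the other content m'. -/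
open scoped BigOperators

/-- The strategy simplex `S = { x ∈ [0,1]^2 : x^1 + x^2 ≤ 1 }` of a UT in the
two-UT two-content model (contents have size 1, cache size 1). -/
def Ssimplex : Set (Fin 2 → ℝ) :=
  {x | (∀ m, 0 ≤ x m ∧ x m ≤ 1) ∧ x 0 + x 1 ≤ 1}

/-- UT 1's utility in the two-UT two-content model. -/
def U1 (p1 p2 : Fin 2 → ℝ) (r wd d12 d10 : ℝ) (x1 x2 : Fin 2 → ℝ) : ℝ :=
  ∑ m, (p2 m * r * min (x1 m) (1 - x2 m)
    - wd * p1 m * max ((1 - x1 m) * d12) ((1 - x1 m - x2 m) * d10 + x2 m * d12))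

/-!
On the region `x₁ᵐ + x₂ᵐ ≤ 1` both the `min` and the `max` in `U1` are attained by their
second argument, so `U1 (·) x₂` is affine in `x₁` with slopes `p₂ᵐ r + w_d p₁ᵐ d_{1,0} ≥ 0`.
The hypothesis `|p₂¹ - p₂²| r < |p₁¹ - p₁²| w_d d_{1,0}` makes the slope of UT 1's
favourite content the larger one, so the affine function is maximised at the vertex caching it.
-/

open Finset

theorem Fin.two_eq_or_eq_of_ne {i j : Fin 2} (hij : i ≠ j) (m : Fin 2) : m = i ∨ m = j := by
  omega

theorem Fin.two_abs_sub_eq_of_ne (f : Fin 2 → ℝ) {i j : Fin 2} (hij : i ≠ j) :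
    |f 0 - f 1| = |f i - f j| := by
  fin_cases i <;> fin_cases j <;> simp_all [abs_sub_comm]

theorem sum_mul_le_of_sum_le_one {ι R : Type*} [Fintype ι] [CommSemiring R] [PartialOrder R]
    [IsOrderedRing R] {c x : ι → R} (i : ι) (hx : ∀ m, 0 ≤ x m) (hsum : ∑ m, x m ≤ 1)
    (hc : ∀ m, c m ≤ c i) (hci : 0 ≤ c i) :
    ∑ m, c m * x m ≤ c i :=
  calc ∑ m, c m * x m ≤ ∑ m, c i * x m :=
        sum_le_sum fun m _ => mul_le_mul_of_nonneg_right (hc m) (hx m)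
    _ = c i * ∑ m, x m := (mul_sum _ _ _).symm
    _ ≤ c i := mul_le_of_le_one_right hci hsum

theorem U1_eq_of_add_le_one (p1 p2 : Fin 2 → ℝ) (r wd : ℝ) {d12 d10 : ℝ} (hd : d12 ≤ d10)
    {x1 x2 : Fin 2 → ℝ} (hx : ∀ m, x1 m + x2 m ≤ 1) :
    U1 p1 p2 r wd d12 d10 x1 x2 = ∑ m, (p2 m * r + wd * p1 m * d10) * x1 m
      - ∑ m, wd * p1 m * ((1 - x2 m) * d10 + x2 m * d12) := by
  rw [U1, ← sum_sub_distrib]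
  refine sum_congr rfl fun m _ => ?_
  have hfree : 0 ≤ 1 - x1 m - x2 m := by linarith [hx m]
  rw [min_eq_left (by linarith [hx m]),
    max_eq_right (by nlinarith [mul_nonneg hfree (sub_nonneg.2 hd)])]
  ring

theorem U1_slope_le_of_lt {p1 p2 : Fin 2 → ℝ} {r wd d10 : ℝ} (hr : 0 ≤ r)
    (hlt : |p2 0 - p2 1| * r < |p1 0 - p1 1| * wd * d10) {i j : Fin 2} (hij : i ≠ j)
    (hp : p1 j < p1 i) :
    p2 j * r + wd * p1 j * d10 ≤ p2 i * r + wd * p1 i * d10 := by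
  rw [Fin.two_abs_sub_eq_of_ne p1 hij, abs_of_pos (sub_pos.2 hp),
    Fin.two_abs_sub_eq_of_ne p2 hij] at hlt
  nlinarith [mul_le_mul_of_nonneg_right (neg_abs_le (p2 i - p2 j)) hr]

theorem statement1_general (p1 p2 : Fin 2 → ℝ) (r wd d12 d10 : ℝ)
    (hp1 : ∀ m, 0 ≤ p1 m) (hp2 : ∀ m, 0 ≤ p2 m)
    (hr : 0 ≤ r) (hwd : 0 ≤ wd) (hd12 : 0 ≤ d12) (hd : d12 ≤ d10)
    (hlt : |p2 0 - p2 1| * r < |p1 0 - p1 1| * wd * d10) :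
    p1 0 ≠ p1 1 ∧
      ∀ mstar mprime : Fin 2, mstar ≠ mprime → p1 mprime < p1 mstar →
        ∀ x2 ∈ Ssimplex, x2 mstar = 0 →
          ∀ x1 ∈ Ssimplex, (∀ m, x1 m + x2 m ≤ 1) →
            U1 p1 p2 r wd d12 d10 x1 x2 ≤
              U1 p1 p2 r wd d12 d10 (fun m => if m = mstar then 1 else 0) x2 := by
  refine ⟨fun h => ?_, fun i j hij hp x2 hx2 hx2i x1 hx1 hx => ?_⟩
  · rw [h, sub_self, abs_zero, zero_mul, zero_mul] at hlt
    exact hlt.not_ge (mul_nonneg (abs_nonneg _) hr)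
  have hvertex : ∀ m, (if m = i then 1 else 0) + x2 m ≤ 1 := fun m => by
    split_ifs with hm
    · rw [hm, hx2i]; norm_num
    · linarith [(hx2.1 m).2]
  rw [U1_eq_of_add_le_one p1 p2 r wd hd hx, U1_eq_of_add_le_one p1 p2 r wd hd hvertex]
  simp only [mul_ite, mul_one, mul_zero, sum_ite_eq', mem_univ, if_true]
  gcongr
  refine sum_mul_le_of_sum_le_one i (fun m => (hx1.1 m).1) (by simpa using hx1.2) ?_ ?_
  · intro m
    rcases Fin.two_eq_or_eq_of_ne hij m with rfl | rfl
    exacts [le_rfl, U1_slope_le_of_lt hr hlt hij hp]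
  · exact add_nonneg (mul_nonneg (hp2 i) hr) (mul_nonneg (mul_nonneg hwd (hp1 i)) (hd12.trans hd))

/-- If `|p_2^1 - p_2^2| r < |p_1^1 - p_1^2| w_d d_{1,0}` then UT 1's preferences differ
on the two contents, and for UT 1's favorite content `m*`, whenever UT 2 caches none of
`m*`, completely caching `m*` maximizes UT 1's utility over the first-case region
`{ x_1 ∈ S : x_1^m + x_2^m ≤ 1, m = 1,2 }`. -/
theorem statement1 (p1 p2 : Fin 2 → ℝ) (r wd d12 d10 : ℝ)
    (hp1 : ∀ m, 0 ≤ p1 m) (hp2 : ∀ m, 0 ≤ p2 m)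
    (hp1sum : p1 0 + p1 1 = 1) (hp2sum : p2 0 + p2 1 = 1)
    (hr : 0 ≤ r) (hwd : 0 ≤ wd) (hd12 : 0 ≤ d12) (hd : d12 ≤ d10)
    (hlt : |p2 0 - p2 1| * r < |p1 0 - p1 1| * wd * d10) :
    p1 0 ≠ p1 1 ∧
      ∀ mstar mprime : Fin 2, mstar ≠ mprime → p1 mprime < p1 mstar →
        ∀ x2 ∈ Ssimplex, x2 mstar = 0 →
          ∀ x1 ∈ Ssimplex, (∀ m, x1 m + x2 m ≤ 1) →
            U1 p1 p2 r wd d12 d10 x1 x2 ≤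
              U1 p1 p2 r wd d12 d10 (fun m => if m = mstar then 1 else 0) x2 :=
  statement1_general p1 p2 r wd d12 d10 hp1 hp2 hr hwd hd12 hd hlt
end

section
/- Suppose p_2^1 != p_2^2 and |p_2^1 - p_2^2| * r >= |p_1^1 - p_1^2| * w_d * d_{1,0}. Let m* in {1,2} be the content with p_2^{m*} > p_2^{m'}, where m' denotes the other content. Then for every x_2 in S with x_2^{m*} = 0, the strategy x_1 with x_1^{m*} = 1 and x_1^{m'} = 0 (completely caching UT 2's favorite content m*) maximizes U_1(., x_2) over the set { x_1 in S : x_1^m + x_2^m <= 1 for m = 1, 2 }; in particular this holds when x_2 completely caches the other content m'. -/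
open scoped BigOperators

lemma max_aux (d12 d10 a b : ℝ) (hd : d12 ≤ d10) (hab : a + b ≤ 1) :
    max ((1 - a) * d12) ((1 - a - b) * d10 + b * d12) = (1 - a - b) * d10 + b * d12 := by
  apply max_eq_right
  nlinarith [mul_nonneg (by linarith : (0:ℝ) ≤ 1 - a - b) (by linarith : (0:ℝ) ≤ d10 - d12)]

set_option maxHeartbeats 1000000 in
/-- If `p_2^1 ≠ p_2^2` and `|p_2^1 - p_2^2| r ≥ |p_1^1 - p_1^2| w_d d_{1,0}`, then for
UT 2's favorite content `m*`, whenever UT 2 caches none of `m*`, completely caching `m*`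
maximizes UT 1's utility over the first-case region
`{ x_1 ∈ S : x_1^m + x_2^m ≤ 1, m = 1,2 }`. -/
theorem statement2 (p1 p2 : Fin 2 → ℝ) (r wd d12 d10 : ℝ)
    (hp1 : ∀ m, 0 ≤ p1 m) (hp2 : ∀ m, 0 ≤ p2 m)
    (hp1sum : p1 0 + p1 1 = 1) (hp2sum : p2 0 + p2 1 = 1)
    (hr : 0 ≤ r) (hwd : 0 ≤ wd) (hd12 : 0 ≤ d12) (hd : d12 ≤ d10)
    (hne : p2 0 ≠ p2 1)
    (hge : |p1 0 - p1 1| * wd * d10 ≤ |p2 0 - p2 1| * r) :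
    ∀ mstar mprime : Fin 2, mstar ≠ mprime → p2 mprime < p2 mstar →
      ∀ x2 ∈ Ssimplex, x2 mstar = 0 →
        ∀ x1 ∈ Ssimplex, (∀ m, x1 m + x2 m ≤ 1) →
          U1 p1 p2 r wd d12 d10 x1 x2 ≤
            U1 p1 p2 r wd d12 d10 (fun m => if m = mstar then 1 else 0) x2 := by
  intro mstar mprime hnem hlt x2 hx2 hx2s x1 hx1 hcon
  obtain ⟨hx2b, hx2sum⟩ := hx2
  obtain ⟨hx1b, hx1sum⟩ := hx1
  have h20 := (hx2b 0).1; have h21 := (hx2b 0).2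
  have h20' := (hx2b 1).1; have h21' := (hx2b 1).2
  have h10 := (hx1b 0).1; have h11 := (hx1b 0).2
  have h10' := (hx1b 1).1; have h11' := (hx1b 1).2
  have hc0 := hcon 0; have hc1 := hcon 1
  have habs1 : p1 1 - p1 0 ≤ |p1 0 - p1 1| := by
    rw [abs_sub_comm]; exact le_abs_self _
  have habs1' : p1 0 - p1 1 ≤ |p1 0 - p1 1| := le_abs_self _
  have hm1 := max_aux d12 d10 (x1 0) (x2 0) hd hc0
  have hm2 := max_aux d12 d10 (x1 1) (x2 1) hd hc1
  have hmin1 : min (x1 0) (1 - x2 0) = x1 0 := min_eq_left (by linarith)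
  have hmin2 : min (x1 1) (1 - x2 1) = x1 1 := min_eq_left (by linarith)
  have hd10 : 0 ≤ d10 := le_trans hd12 hd
  fin_cases mstar <;> fin_cases mprime
  · exact absurd rfl hnem
  · -- mstar = 0, mprime = 1
    have hlt' : p2 1 < p2 0 := hlt
    have hx2s0 : x2 0 = 0 := hx2s
    have habs2 : |p2 0 - p2 1| = p2 0 - p2 1 := abs_of_pos (by linarith)
    rw [habs2] at hge
    have key : (p1 1 - p1 0) * wd * d10 ≤ (p2 0 - p2 1) * r :=
      le_trans (mul_le_mul_of_nonneg_right (mul_le_mul_of_nonneg_right habs1 hwd) hd10) hge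
    simp only [U1, Fin.sum_univ_two]
    norm_num
    rw [hm1, hm2, hmin1, hmin2]
    rw [min_eq_left (by linarith : (1:ℝ) ≤ 1 - x2 0)]
    rw [min_eq_left (by linarith : (0:ℝ) ≤ 1 - x2 1)]
    have e1 : (0:ℝ) ≤ -(x2 0 * d10) + x2 0 * d12 := by rw [hx2s0]; norm_num
    have e2 : d12 ≤ (1 - x2 1) * d10 + x2 1 * d12 := by
      nlinarith [mul_nonneg (by linarith : (0:ℝ) ≤ 1 - x2 1)
        (by linarith : (0:ℝ) ≤ d10 - d12)]
    rw [max_eq_right e1, max_eq_right e2]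
    have f2 : (0:ℝ) ≤ ((p2 0 * r + wd * p1 0 * d10) - (p2 1 * r + wd * p1 1 * d10)) * x1 1 := by
      apply mul_nonneg _ h10'
      nlinarith [key]
    have f1 : (0:ℝ) ≤ (p2 0 * r + wd * p1 0 * d10) * (1 - x1 0 - x1 1) :=
      mul_nonneg (add_nonneg (mul_nonneg (hp2 0) hr)
        (mul_nonneg (mul_nonneg hwd (hp1 0)) hd10)) (by linarith)
    rw [hx2s0]
    nlinarith [f1, f2]
  · -- mstar = 1, mprime = 0
    have hlt' : p2 0 < p2 1 := hlt
    have hx2s0 : x2 1 = 0 := hx2s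
    have habs2 : |p2 0 - p2 1| = p2 1 - p2 0 := by
      rw [abs_sub_comm]; exact abs_of_pos (by linarith)
    rw [habs2] at hge
    have key : (p1 0 - p1 1) * wd * d10 ≤ (p2 1 - p2 0) * r :=
      le_trans (mul_le_mul_of_nonneg_right (mul_le_mul_of_nonneg_right habs1' hwd) hd10) hge
    simp only [U1, Fin.sum_univ_two]
    norm_num
    rw [hm1, hm2, hmin1, hmin2]
    rw [min_eq_left (by linarith : (1:ℝ) ≤ 1 - x2 1)]
    rw [min_eq_left (by linarith : (0:ℝ) ≤ 1 - x2 0)]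
    have e1 : (0:ℝ) ≤ -(x2 1 * d10) + x2 1 * d12 := by rw [hx2s0]; norm_num
    have e2 : d12 ≤ (1 - x2 0) * d10 + x2 0 * d12 := by
      nlinarith [mul_nonneg (by linarith : (0:ℝ) ≤ 1 - x2 0)
        (by linarith : (0:ℝ) ≤ d10 - d12)]
    rw [max_eq_right e1, max_eq_right e2]
    have f2 : (0:ℝ) ≤ ((p2 1 * r + wd * p1 1 * d10) - (p2 0 * r + wd * p1 0 * d10)) * x1 0 := by
      apply mul_nonneg _ h10
      nlinarith [key]
    have f1 : (0:ℝ) ≤ (p2 1 * r + wd * p1 1 * d10) * (1 - x1 0 - x1 1) :=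
      mul_nonneg (add_nonneg (mul_nonneg (hp2 1) hr)
        (mul_nonneg (mul_nonneg hwd (hp1 1)) hd10)) (by linarith)
    rw [hx2s0]
    nlinarith [f1, f2]
  · exact absurd rfl hnem
end

section
/- For any x_1, x_2 in S with x_1^1 + x_2^1 <= 1 and x_1^2 + x_2^2 >= 1 (the second case of the proof of Theorem 1), there exist y_1, y_2 in S with y_1^m + y_2^m <= 1 for m = 1, 2 such that U_1(y_1, y_2) >= U_1(x_1, x_2); consequently, the supremum of U_1 over the second-case region is at most its supremum over the first-case region. -/
open scoped BigOperators

/-- Any profile in the second-case region (`x_1^1 + x_2^1 ≤ 1`, `x_1^2 + x_2^2 ≥ 1`) is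
weakly dominated by some profile in the first-case region (`y_1^m + y_2^m ≤ 1` for both
contents); consequently the supremum of `U_1` over the second-case region is at most its
supremum over the first-case region. -/
theorem statement6 (p1 p2 : Fin 2 → ℝ) (r wd d12 d10 : ℝ)
    (hp1 : ∀ m, 0 ≤ p1 m) (hp2 : ∀ m, 0 ≤ p2 m)
    (hp1sum : p1 0 + p1 1 = 1) (hp2sum : p2 0 + p2 1 = 1)
    (hr : 0 ≤ r) (hwd : 0 ≤ wd) (hd12 : 0 ≤ d12) (hd : d12 ≤ d10) :
    (∀ x1 ∈ Ssimplex, ∀ x2 ∈ Ssimplex, x1 0 + x2 0 ≤ 1 → 1 ≤ x1 1 + x2 1 →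
      ∃ y1 ∈ Ssimplex, ∃ y2 ∈ Ssimplex, (∀ m, y1 m + y2 m ≤ 1) ∧
        U1 p1 p2 r wd d12 d10 x1 x2 ≤ U1 p1 p2 r wd d12 d10 y1 y2) ∧
    sSup ((fun q : (Fin 2 → ℝ) × (Fin 2 → ℝ) => U1 p1 p2 r wd d12 d10 q.1 q.2) ''
        {q | q.1 ∈ Ssimplex ∧ q.2 ∈ Ssimplex ∧ q.1 0 + q.2 0 ≤ 1 ∧ 1 ≤ q.1 1 + q.2 1}) ≤
      sSup ((fun q : (Fin 2 → ℝ) × (Fin 2 → ℝ) => U1 p1 p2 r wd d12 d10 q.1 q.2) ''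
        {q | q.1 ∈ Ssimplex ∧ q.2 ∈ Ssimplex ∧ ∀ m, q.1 m + q.2 m ≤ 1}) := by
  have key : ∀ x1 ∈ Ssimplex, ∀ x2 ∈ Ssimplex, x1 0 + x2 0 ≤ 1 → 1 ≤ x1 1 + x2 1 →
      ∃ y1 ∈ Ssimplex, ∃ y2 ∈ Ssimplex, (∀ m, y1 m + y2 m ≤ 1) ∧
        U1 p1 p2 r wd d12 d10 x1 x2 ≤ U1 p1 p2 r wd d12 d10 y1 y2 := by
    intro x1 hx1 x2 hx2 h0 h1
    obtain ⟨hx1b, hx1s⟩ := hx1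
    obtain ⟨hx2b, hx2s⟩ := hx2
    have h10 := hx1b 0; have h11 := hx1b 1; have h20 := hx2b 0; have h21 := hx2b 1
    refine ⟨x1, ⟨hx1b, hx1s⟩, ![x2 0, 1 - x1 1], ⟨?_, ?_⟩, ?_, ?_⟩
    · intro m
      fin_cases m
      · simpa using h20
      · refine ⟨?_, ?_⟩ <;> simp <;> linarith [h11.1, h11.2]
    · simp only [Matrix.cons_val_zero, Matrix.cons_val_one, Matrix.head_cons]
      linarith [h20.1, h21.2]
    · intro m
      fin_cases m
      · simpa using h0
      · simp
    · unfold U1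
      rw [Fin.sum_univ_two, Fin.sum_univ_two]
      simp only [Matrix.cons_val_zero, Matrix.cons_val_one, Matrix.head_cons]
      have e1 : min (x1 1) (1 - (1 - x1 1)) = x1 1 := by
        rw [min_eq_left]; linarith
      have e2 : max ((1 - x1 1) * d12) ((1 - x1 1 - (1 - x1 1)) * d10 + (1 - x1 1) * d12)
          = (1 - x1 1) * d12 := by
        rw [max_eq_left]; nlinarith
      rw [e1, e2]
      have hmin : min (x1 1) (1 - x2 1) ≤ x1 1 := min_le_left _ _
      have hmax : (1 - x1 1) * d12
          ≤ max ((1 - x1 1) * d12) ((1 - x1 1 - x2 1) * d10 + x2 1 * d12) :=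
        le_max_left _ _
      have hc1 : 0 ≤ p2 1 * r := mul_nonneg (hp2 1) hr
      have hc2 : 0 ≤ wd * p1 1 := mul_nonneg hwd (hp1 1)
      nlinarith [mul_le_mul_of_nonneg_left hmin hc1, mul_le_mul_of_nonneg_left hmax hc2]
  refine ⟨key, ?_⟩
  set f := fun q : (Fin 2 → ℝ) × (Fin 2 → ℝ) => U1 p1 p2 r wd d12 d10 q.1 q.2
  have hbdd : BddAbove (f '' {q | q.1 ∈ Ssimplex ∧ q.2 ∈ Ssimplex ∧ ∀ m, q.1 m + q.2 m ≤ 1}) := by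
    refine ⟨r, ?_⟩
    rintro v ⟨⟨y1, y2⟩, ⟨hy1, hy2, _⟩, rfl⟩
    have hb : ∀ m : Fin 2, p2 m * r * min (y1 m) (1 - y2 m)
        - wd * p1 m * max ((1 - y1 m) * d12) ((1 - y1 m - y2 m) * d10 + y2 m * d12)
        ≤ p2 m * r := by
      intro m
      have h1 := (hy1.1 m).1; have h2 := (hy1.1 m).2
      have h3 := (hy2.1 m).1; have h4 := (hy2.1 m).2
      have hmin : min (y1 m) (1 - y2 m) ≤ 1 := le_trans (min_le_left _ _) h2
      have hmaxnn : 0 ≤ max ((1 - y1 m) * d12) ((1 - y1 m - y2 m) * d10 + y2 m * d12) :=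
        le_trans (by nlinarith) (le_max_left _ _)
      have hc1 : 0 ≤ p2 m * r := mul_nonneg (hp2 m) hr
      have hc2 : 0 ≤ wd * p1 m := mul_nonneg hwd (hp1 m)
      nlinarith [mul_le_mul_of_nonneg_left hmin hc1, mul_nonneg hc2 hmaxnn]
    calc f (y1, y2) = U1 p1 p2 r wd d12 d10 y1 y2 := rfl
      _ ≤ p2 0 * r + p2 1 * r := by
          unfold U1; rw [Fin.sum_univ_two]; exact add_le_add (hb 0) (hb 1)
      _ = (p2 0 + p2 1) * r := by ring
      _ = r := by rw [hp2sum, one_mul]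
  have hne : (f '' {q | q.1 ∈ Ssimplex ∧ q.2 ∈ Ssimplex ∧
      q.1 0 + q.2 0 ≤ 1 ∧ 1 ≤ q.1 1 + q.2 1}).Nonempty := by
    refine ⟨f (![0, 1], fun _ => 0), ⟨(![0, 1], fun _ => 0), ⟨?_, ?_, ?_, ?_⟩, rfl⟩⟩
    · refine ⟨fun m => ?_, by norm_num⟩
      fin_cases m <;> norm_num
    · exact ⟨fun m => by norm_num, by norm_num⟩
    · norm_num
    · norm_num
  refine csSup_le hne ?_
  rintro v ⟨⟨x1, x2⟩, ⟨hx1, hx2, ha, hb'⟩, rfl⟩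
  obtain ⟨y1, hy1, y2, hy2, hsum, hle⟩ := key x1 hx1 x2 hx2 ha hb'
  exact le_trans hle (le_csSup hbdd ⟨(y1, y2), ⟨hy1, hy2, hsum⟩, rfl⟩)
end
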